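/- arXiv:2001.07103 — 8 statements merged into one kernel-verified Lean document; each statement's English description precedes it below -/
import Mathlib

section
/- For any k with 1 < k < n, the maximum over i in {k+1,...,n} of d_i equals the maximum over i in {k+1,...,n} of d_i^(k), where d_i is the length of the longest increasing subsequence of a_1,...,a_n passing through (containing) a_i, and d_i^(k) is the length of the longest increasing subsequence passing through a_i that excludes all items a_{k+1},...,a_{i-1}. -/
/-!
An increasing subsequence through some `a_i` with `k < i` also passes through its first index
`j > k`, and it avoids every index strictly between `k` and `j`; hence it is counted by `d_j^(k)`.
So every `d_i` is bounded by some `d_j^(k)`, while `d_i^(k) ≤ d_i` since `d_i^(k)` maximises over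
fewer subsequences.
-/

theorem Finset.exists_mem_gt_forall_not_mem_Ioo {α : Type*} [LinearOrder α] (S : Finset α)
    (k : α) (h : ∃ i ∈ S, k < i) : ∃ j ∈ S, k < j ∧ ∀ x ∈ S, ¬ (k < x ∧ x < j) := by
  have hne : (S.filter (k < ·)).Nonempty := by simpa [Finset.filter_nonempty_iff] using h
  obtain ⟨hjS, hkj⟩ := Finset.mem_filter.1 ((S.filter (k < ·)).min'_mem hne)
  refine ⟨_, hjS, hkj, fun x hx ⟨hkx, hxj⟩ => ?_⟩
  exact (Finset.min'_le _ x (Finset.mem_filter.2 ⟨hx, hkx⟩)).not_gt hxj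

theorem Finset.bddAbove_card_of_subset {α : Type*} (s : Finset α) :
    BddAbove {m | ∃ S ⊆ s, S.card = m} := by
  refine ⟨s.card, ?_⟩
  rintro _ ⟨S, hS, rfl⟩
  exact Finset.card_le_card hS

theorem stmt_0_general (n k : ℕ) (a : ℕ → ℝ)
    (d dk : ℕ → ℕ)
    (hd : ∀ i, d i = sSup {m | ∃ S : Finset ℕ, S ⊆ Finset.Icc 1 n ∧
        (∀ p ∈ S, ∀ q ∈ S, p < q → a p < a q) ∧ i ∈ S ∧ S.card = m})
    (hdk : ∀ i, dk i = sSup {m | ∃ S : Finset ℕ, S ⊆ Finset.Icc 1 n ∧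
        (∀ p ∈ S, ∀ q ∈ S, p < q → a p < a q) ∧ i ∈ S ∧
        (∀ j ∈ S, ¬ (k < j ∧ j < i)) ∧ S.card = m}) :
    (Finset.Ioc k n).sup d = (Finset.Ioc k n).sup dk := by
  have hbdd := (Finset.Icc 1 n).bddAbove_card_of_subset
  apply le_antisymm
  · refine Finset.sup_le fun i hi => ?_
    rw [hd]
    refine csSup_le' ?_
    rintro _ ⟨S, hS, hinc, hiS, rfl⟩
    obtain ⟨j, hjS, hkj, hgap⟩ :=
      S.exists_mem_gt_forall_not_mem_Ioo k ⟨i, hiS, (Finset.mem_Ioc.1 hi).1⟩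
    calc S.card ≤ dk j := by
          rw [hdk]
          exact le_csSup (hbdd.mono (by rintro _ ⟨T, hT, -, -, -, rfl⟩; exact ⟨T, hT, rfl⟩))
            ⟨S, hS, hinc, hjS, hgap, rfl⟩
      _ ≤ (Finset.Ioc k n).sup dk :=
          Finset.le_sup (Finset.mem_Ioc.2 ⟨hkj, (Finset.mem_Icc.1 (hS hjS)).2⟩)
  · refine Finset.sup_mono_fun fun i _ => ?_
    rw [hd, hdk]
    refine csSup_le_csSup' (hbdd.mono ?_) ?_
    · rintro _ ⟨T, hT, -, -, rfl⟩
      exact ⟨T, hT, rfl⟩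
    · rintro _ ⟨T, hT, hinc, hiT, -, rfl⟩
      exact ⟨T, hT, hinc, hiT, rfl⟩

/-- For 1 < k < n, the max over i ∈ {k+1,...,n} of d_i equals the max over
i ∈ {k+1,...,n} of d_i^(k), where d_i is the length of the longest strictly increasing
subsequence of a_1,...,a_n containing a_i, and d_i^(k) additionally avoids indices in
{k+1,...,i-1}. -/
theorem stmt_0 (n k : ℕ) (a : ℕ → ℝ) (hk1 : 1 < k) (hkn : k < n)
    (d dk : ℕ → ℕ)
    (hd : ∀ i, d i = sSup {m | ∃ S : Finset ℕ, S ⊆ Finset.Icc 1 n ∧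
        (∀ p ∈ S, ∀ q ∈ S, p < q → a p < a q) ∧ i ∈ S ∧ S.card = m})
    (hdk : ∀ i, dk i = sSup {m | ∃ S : Finset ℕ, S ⊆ Finset.Icc 1 n ∧
        (∀ p ∈ S, ∀ q ∈ S, p < q → a p < a q) ∧ i ∈ S ∧
        (∀ j ∈ S, ¬ (k < j ∧ j < i)) ∧ S.card = m}) :
    (Finset.Ioc k n).sup d = (Finset.Ioc k n).sup dk :=
  stmt_0_general n k a d dk hd hdk
end

section
/- The length of the longest strictly increasing subsequence of a_1,...,a_n equals max( max over 1 ≤ i ≤ k of l_i, max over k < i ≤ n of d_i^(k) ), for any fixed k with 1 < k < n (assuming n ≥ 1 so the sequence is nonempty). -/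
/-!
Every index set admissible for `l i` (with `i ≤ k < n`) or for `dk i` is an increasing
subsequence of `a_1, …, a_n`, which gives `≥`. Conversely, take a longest increasing
subsequence `S`. If `S` stays in `1, …, k`, it ends at its maximum `i ≤ k` and witnesses
`L ≤ l i`. Otherwise let `i` be its first index beyond `k`; then `S` avoids `k+1, …, i-1` and
witnesses `L ≤ dk i`.
-/

open Finset

theorem Finset.exists_max_le_or_exists_min_gt {α : Type*} [LinearOrder α] (S : Finset α)
    (hS : S.Nonempty) (k : α) :
    (∃ i ∈ S, i ≤ k ∧ ∀ j ∈ S, j ≤ i) ∨ (∃ i ∈ S, k < i ∧ ∀ j ∈ S, k < j → i ≤ j) := by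
  by_cases h : (S.filter (k < ·)).Nonempty
  · right
    obtain ⟨hiS, hki⟩ := mem_filter.1 ((S.filter (k < ·)).min'_mem h)
    exact ⟨_, hiS, hki, fun j hj hkj => min'_le _ j (mem_filter.2 ⟨hj, hkj⟩)⟩
  · left
    refine ⟨S.max' hS, S.max'_mem hS, not_lt.1 fun hk => h ?_, S.le_max'⟩
    exact ⟨_, mem_filter.2 ⟨S.max'_mem hS, hk⟩⟩

theorem Finset.exists_mem_Icc_or_exists_mem_Ioc_of_subset_Icc {S : Finset ℕ} {n : ℕ}
    (hSn : S ⊆ Icc 1 n) (hS : S.Nonempty) (k : ℕ) :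
    (∃ i ∈ Icc 1 k, S ⊆ Icc 1 i ∧ i ∈ S) ∨
      (∃ i ∈ Ioc k n, i ∈ S ∧ ∀ j ∈ S, ¬ (k < j ∧ j < i)) := by
  rcases S.exists_max_le_or_exists_min_gt hS k with ⟨i, hiS, hik, hmax⟩ | ⟨i, hiS, hki, hmin⟩
  · refine .inl ⟨i, mem_Icc.2 ⟨(mem_Icc.1 (hSn hiS)).1, hik⟩, fun j hj => ?_, hiS⟩
    exact mem_Icc.2 ⟨(mem_Icc.1 (hSn hj)).1, hmax j hj⟩
  · refine .inr ⟨i, mem_Ioc.2 ⟨hki, (mem_Icc.1 (hSn hiS)).2⟩, hiS, ?_⟩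
    exact fun j hj ⟨hkj, hji⟩ => absurd hji (hmin j hj hkj).not_gt

theorem bddAbove_of_forall_exists_card {α : Type*} (s : Finset α) {A : Set ℕ}
    (hA : ∀ m ∈ A, ∃ S ⊆ s, S.card = m) : BddAbove A :=
  ⟨s.card, fun m hm => by obtain ⟨S, hS, rfl⟩ := hA m hm; exact card_le_card hS⟩

theorem stmt_3_general (n k : ℕ) (a : ℕ → ℝ) (hkn : k < n)
    (l dk : ℕ → ℕ) (L : ℕ)
    (hl : ∀ j, l j = sSup {m | ∃ S : Finset ℕ, S ⊆ Finset.Icc 1 j ∧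
        (∀ p ∈ S, ∀ q ∈ S, p < q → a p < a q) ∧ j ∈ S ∧ S.card = m})
    (hdk : ∀ i, dk i = sSup {m | ∃ S : Finset ℕ, S ⊆ Finset.Icc 1 n ∧
        (∀ p ∈ S, ∀ q ∈ S, p < q → a p < a q) ∧ i ∈ S ∧
        (∀ j ∈ S, ¬ (k < j ∧ j < i)) ∧ S.card = m})
    (hL : L = sSup {m | ∃ S : Finset ℕ, S ⊆ Finset.Icc 1 n ∧
        (∀ p ∈ S, ∀ q ∈ S, p < q → a p < a q) ∧ S.card = m}) :
    L = max ((Finset.Icc 1 k).sup l) ((Finset.Ioc k n).sup dk) := by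
  set T := {m | ∃ S : Finset ℕ, S ⊆ Icc 1 n ∧
    (∀ p ∈ S, ∀ q ∈ S, p < q → a p < a q) ∧ S.card = m}
  have hbdd : BddAbove T :=
    bddAbove_of_forall_exists_card (Icc 1 n) fun _ ⟨S, hS, _, hm⟩ => ⟨S, hS, hm⟩
  have hl_le (i : ℕ) (hi : i ≤ n) : l i ≤ L := by
    rw [hl, hL]
    exact csSup_le_csSup' hbdd fun _ ⟨S, hS, hinc, _, hm⟩ =>
      ⟨S, hS.trans (Icc_subset_Icc_right hi), hinc, hm⟩
  have hdk_le (i : ℕ) : dk i ≤ L := by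
    rw [hdk, hL]
    exact csSup_le_csSup' hbdd fun _ ⟨S, hS, hinc, _, _, hm⟩ => ⟨S, hS, hinc, hm⟩
  refine le_antisymm ?_ (max_le (Finset.sup_le fun i hi => hl_le i ((mem_Icc.1 hi).2.trans hkn.le))
    (Finset.sup_le fun i _ => hdk_le i))
  obtain ⟨S, hS, hinc, hcard⟩ : L ∈ T :=
    hL ▸ Nat.sSup_mem ⟨0, ∅, empty_subset _, by simp, rfl⟩ hbdd
  rcases S.eq_empty_or_nonempty with rfl | hne
  · simp [← hcard]
  rcases exists_mem_Icc_or_exists_mem_Ioc_of_subset_Icc hS hne k with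
    ⟨i, hi, hSi, hiS⟩ | ⟨i, hi, hiS, hgap⟩
  · refine le_max_of_le_left (le_trans ?_ (le_sup hi))
    rw [hl]
    exact le_csSup
      (bddAbove_of_forall_exists_card (Icc 1 i) fun _ ⟨S, hS, _, _, hm⟩ => ⟨S, hS, hm⟩)
      ⟨S, hSi, hinc, hiS, hcard⟩
  · refine le_max_of_le_right (le_trans ?_ (le_sup hi))
    rw [hdk]
    exact le_csSup
      (bddAbove_of_forall_exists_card (Icc 1 n) fun _ ⟨S, hS, _, _, _, hm⟩ => ⟨S, hS, hm⟩)
      ⟨S, hS, hinc, hiS, hgap, hcard⟩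

/-- The length of the longest strictly increasing subsequence of a_1,...,a_n
equals max( max_{1 ≤ i ≤ k} l_i, max_{k < i ≤ n} d_i^(k) ) for any 1 < k < n, n ≥ 1. -/
theorem stmt_3 (n k : ℕ) (a : ℕ → ℝ) (hn : 1 ≤ n) (hk1 : 1 < k) (hkn : k < n)
    (l dk : ℕ → ℕ) (L : ℕ)
    (hl : ∀ j, l j = sSup {m | ∃ S : Finset ℕ, S ⊆ Finset.Icc 1 j ∧
        (∀ p ∈ S, ∀ q ∈ S, p < q → a p < a q) ∧ j ∈ S ∧ S.card = m})
    (hdk : ∀ i, dk i = sSup {m | ∃ S : Finset ℕ, S ⊆ Finset.Icc 1 n ∧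
        (∀ p ∈ S, ∀ q ∈ S, p < q → a p < a q) ∧ i ∈ S ∧
        (∀ j ∈ S, ¬ (k < j ∧ j < i)) ∧ S.card = m})
    (hL : L = sSup {m | ∃ S : Finset ℕ, S ⊆ Finset.Icc 1 n ∧
        (∀ p ∈ S, ∀ q ∈ S, p < q → a p < a q) ∧ S.card = m}) :
    L = max ((Finset.Icc 1 k).sup l) ((Finset.Ioc k n).sup dk) :=
  stmt_3_general n k a hkn l dk L hl hdk hL
end

section
/- Floyd-Warshall is correct with in-place computation: after step k of the in-place update M[i][j] := min(M[i][j], M[i][k] + M[k][j]) (performed in any order over (i,j)), the resulting matrix equals the matrix M^(k) defined by the non-in-place recurrence, assuming M[k][k] = 0 before step k. -/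
/-!
Since `M k k = 0`, an update with pivot `k` never changes row `k` or column `k`, so every
in-place update `M i j := min (M i j) (M i k + M k j)` reads the same pivot row and column as
the non-in-place recurrence. Each entry is updated exactly once, so the result is `M^(k)`.
-/

namespace FloydWarshall

variable {ι α : Type*} [DecidableEq ι] [LinearOrder α] [AddZeroClass α]

/-- The matrix `M^(k)` of the non-in-place recurrence. -/
def pivot (k : ι) (M : ι → ι → α) (i j : ι) : α :=
  min (M i j) (M i k + M k j)

def relax (k : ι) (M : ι → ι → α) (p : ι × ι) (i j : ι) : α :=
  if i = p.1 ∧ j = p.2 then min (M p.1 p.2) (M p.1 k + M k p.2) else M i j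

theorem relax_apply (k : ι) (M : ι → ι → α) (p : ι × ι) (i j : ι) :
    relax k M p i j = if (i, j) = p then pivot k M i j else M i j := by
  obtain ⟨a, b⟩ := p
  by_cases h : i = a ∧ j = b
  · obtain ⟨rfl, rfl⟩ := h
    simp [relax, pivot]
  · simp [relax, h]

theorem relax_of_ne {k : ι} {M : ι → ι → α} {p : ι × ι} {i j : ι} (h : (i, j) ≠ p) :
    relax k M p i j = M i j := by
  simp [relax_apply, h]

theorem relax_apply_pivot_col {k : ι} {M : ι → ι → α} (hkk : M k k = 0) (p : ι × ι) (i : ι) :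
    relax k M p i k = M i k := by
  simp [relax_apply, pivot, hkk]

theorem relax_apply_pivot_row {k : ι} {M : ι → ι → α} (hkk : M k k = 0) (p : ι × ι) (j : ι) :
    relax k M p k j = M k j := by
  simp [relax_apply, pivot, hkk]

theorem pivot_relax_of_ne {k : ι} {M : ι → ι → α} (hkk : M k k = 0) {p : ι × ι} {i j : ι}
    (h : (i, j) ≠ p) : pivot k (relax k M p) i j = pivot k M i j := by
  simp only [pivot, relax_of_ne h, relax_apply_pivot_col hkk, relax_apply_pivot_row hkk]

theorem foldl_relax_apply {k : ι} {l : List (ι × ι)} (hl : l.Nodup) {M : ι → ι → α}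
    (hkk : M k k = 0) (i j : ι) :
    l.foldl (relax k) M i j = if (i, j) ∈ l then pivot k M i j else M i j := by
  induction l generalizing M with
  | nil => simp
  | cons p l ih =>
    obtain ⟨hpl, hl⟩ := List.nodup_cons.mp hl
    rw [List.foldl_cons, ih hl (by rw [relax_apply_pivot_row hkk, hkk])]
    by_cases hij : (i, j) ∈ l
    · have hne : (i, j) ≠ p := fun h => hpl (h ▸ hij)
      simp [hij, pivot_relax_of_ne hkk hne]
    · simp [hij, relax_apply, eq_comm]

end FloydWarshall

/-- In-place Floyd-Warshall is correct: performing the updates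
M[i][j] := min(M[i][j], M[i][k] + M[k][j]) once for every pair (i,j), in any order,
yields exactly the matrix given by the non-in-place recurrence, assuming M[k][k] = 0. -/
theorem stmt_9 (n : ℕ) (k : Fin n) (Mp : Fin n → Fin n → EReal)
    (hkk : Mp k k = 0)
    (step : (Fin n → Fin n → EReal) → (Fin n × Fin n) → (Fin n → Fin n → EReal))
    (hstep : ∀ M p i' j', step M p i' j' =
      if i' = p.1 ∧ j' = p.2 then min (M p.1 p.2) (M p.1 k + M k p.2) else M i' j') :
    ∀ l : List (Fin n × Fin n), l.Nodup → (∀ p, p ∈ l) →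
      ∀ i j, (l.foldl step Mp) i j = min (Mp i j) (Mp i k + Mp k j) := by
  intro l hl hall i j
  have hrelax : step = FloydWarshall.relax k := by
    funext M p i' j'
    exact hstep M p i' j'
  rw [hrelax, FloydWarshall.foldl_relax_apply hl hkk, if_pos (hall (i, j))]
  rfl
end

section
/- If τ : X → ℝ satisfies τ(x) ≤ min(max(v(x,y), τ(y)), ω(x)) for all adjacent x, y and is maximal (pointwise) among all such functions, then τ satisfies the equality τ(x) = min over neighbors y of x of min(max(v(x,y), τ(y)), ω(x)) for every non-isolated vertex x... in particular, for each x there exists a neighbor y with τ(x) = min(max(v(x,y), τ(y)), ω(x)), or τ(x) = ω(x). -/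
/-!
Raising a valid flooding τ at a single vertex x to the value
m = min over neighbours y of min(max(v(x,y), τ(y)), ω(x)) keeps it valid: the constraints at x
hold by the choice of m, and the constraints at the neighbours only become weaker since
τ(x) ≤ m. Maximality of τ therefore forces τ(x) = m, and a finite minimum is attained.
-/

open Finset

namespace Flooding

variable {X α : Type*} [LinearOrder α] (Adj : X → X → Prop) (v : X → X → α) (ω : X → α)

def IsValid (τ : X → α) : Prop :=
  (∀ x y, Adj x y → τ x ≤ max (v x y) (τ y)) ∧ ∀ x, τ x ≤ ω x

variable {Adj v ω}

theorem IsValid.update [DecidableEq X] {τ : X → α} (hτ : IsValid Adj v ω τ) {x : X} {a : α}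
    (hle : τ x ≤ a) (hω : a ≤ ω x) (hnbr : ∀ y, Adj x y → a ≤ max (v x y) (τ y)) :
    IsValid Adj v ω (Function.update τ x a) := by
  refine ⟨fun z y hzy => ?_, fun z => ?_⟩
  · rcases eq_or_ne z x with rfl | hz <;> rcases eq_or_ne y z with rfl | hy
    · simp
    · simpa [Function.update_of_ne hy] using hnbr y hzy
    · simp
    · rcases eq_or_ne y x with rfl | hyx
      · simpa [Function.update_of_ne hz] using (hτ.1 z y hzy).trans (max_le_max le_rfl hle)
      · simpa [Function.update_of_ne hz, Function.update_of_ne hyx] using hτ.1 z y hzy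
  · rcases eq_or_ne z x with rfl | hz
    · simpa using hω
    · simpa [Function.update_of_ne hz] using hτ.2 z

variable [Fintype X] [DecidableRel Adj]

theorem IsValid.le_inf' {τ : X → α} (hτ : IsValid Adj v ω τ) (x : X)
    (hne : (univ.filter (fun y => Adj x y)).Nonempty) :
    τ x ≤ (univ.filter (fun y => Adj x y)).inf' hne (fun y => min (max (v x y) (τ y)) (ω x)) :=
  Finset.le_inf' _ _ fun y hy => le_min (hτ.1 x y (mem_filter.1 hy).2) (hτ.2 x)

theorem inf'_le_of_forall_isValid_le {τ : X → α} (hτ : IsValid Adj v ω τ)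
    (hmax : ∀ τ', IsValid Adj v ω τ' → ∀ x, τ' x ≤ τ x) (x : X)
    (hne : (univ.filter (fun y => Adj x y)).Nonempty) :
    (univ.filter (fun y => Adj x y)).inf' hne (fun y => min (max (v x y) (τ y)) (ω x)) ≤ τ x := by
  classical
  set m := (univ.filter (fun y => Adj x y)).inf' hne (fun y => min (max (v x y) (τ y)) (ω x))
  have hm_le : ∀ y, Adj x y → m ≤ min (max (v x y) (τ y)) (ω x) := fun y hxy =>
    inf'_le _ (mem_filter.2 ⟨mem_univ y, hxy⟩)
  have hω : m ≤ ω x := by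
    obtain ⟨y, hy⟩ := hne
    exact (hm_le y (mem_filter.1 hy).2).trans (min_le_right _ _)
  have hvalid : IsValid Adj v ω (Function.update τ x m) :=
    hτ.update (hτ.le_inf' x hne) hω fun y hxy => (hm_le y hxy).trans (min_le_left _ _)
  simpa using hmax _ hvalid x

end Flooding

open Flooding in
theorem stmt_11_general {X : Type*} [Fintype X] (Adj : X → X → Prop) [DecidableRel Adj]
    (v : X → X → ℝ) (ω : X → ℝ) (τ : X → ℝ)
    (hvalid1 : ∀ x y, Adj x y → τ x ≤ max (v x y) (τ y))
    (hvalid2 : ∀ x, τ x ≤ ω x)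
    (hmax : ∀ τ' : X → ℝ, (∀ x y, Adj x y → τ' x ≤ max (v x y) (τ' y)) →
      (∀ x, τ' x ≤ ω x) → ∀ x, τ' x ≤ τ x) :
    ∀ x, ∀ hne : (Finset.univ.filter (fun y => Adj x y)).Nonempty,
      τ x = (Finset.univ.filter (fun y => Adj x y)).inf' hne
          (fun y => min (max (v x y) (τ y)) (ω x)) ∧
      ((∃ y, Adj x y ∧ τ x = min (max (v x y) (τ y)) (ω x)) ∨ τ x = ω x) := by
  intro x hne
  have hτ : IsValid Adj v ω τ := ⟨hvalid1, hvalid2⟩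
  have heq := le_antisymm (hτ.le_inf' x hne)
    (inf'_le_of_forall_isValid_le hτ (fun τ' h => hmax τ' h.1 h.2) x hne)
  obtain ⟨y, hy, hy_eq⟩ := exists_mem_eq_inf' hne fun y => min (max (v x y) (τ y)) (ω x)
  exact ⟨heq, Or.inl ⟨y, (mem_filter.1 hy).2, heq.trans hy_eq⟩⟩

/-- If τ is a valid flooding (τ(x) ≤ max(v(x,y), τ(y)) on edges and
τ ≤ ω) and is pointwise maximal among valid floodings, then for every non-isolated
vertex x, τ(x) = min over neighbors y of min(max(v(x,y), τ(y)), ω(x)); in particular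
there is a neighbor y with τ(x) = min(max(v(x,y), τ(y)), ω(x)), or τ(x) = ω(x). -/
theorem stmt_11 {X : Type*} [Fintype X] (Adj : X → X → Prop) [DecidableRel Adj]
    (hsymm : ∀ x y, Adj x y → Adj y x)
    (v : X → X → ℝ) (ω : X → ℝ) (τ : X → ℝ)
    (hvalid1 : ∀ x y, Adj x y → τ x ≤ max (v x y) (τ y))
    (hvalid2 : ∀ x, τ x ≤ ω x)
    (hmax : ∀ τ' : X → ℝ, (∀ x y, Adj x y → τ' x ≤ max (v x y) (τ' y)) →
      (∀ x, τ' x ≤ ω x) → ∀ x, τ' x ≤ τ x) :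
    ∀ x, ∀ hne : (Finset.univ.filter (fun y => Adj x y)).Nonempty,
      τ x = (Finset.univ.filter (fun y => Adj x y)).inf' hne
          (fun y => min (max (v x y) (τ y)) (ω x)) ∧
      ((∃ y, Adj x y ∧ τ x = min (max (v x y) (τ y)) (ω x)) ∨ τ x = ω x) :=
  stmt_11_general Adj v ω τ hvalid1 hvalid2 hmax
end

section
/- Berge's iteration is monotone decreasing and its fixed point is the maximal flooding: defining τ^(0) = ω and τ^(k)_i = min(τ^(k-1)_i, min over neighbors j of max(v_{ij}, τ^(k-1)_j)), the sequence τ^(k) is pointwise nonincreasing in k, every valid flooding is a pointwise lower bound of every τ^(k), and if τ^(k) = τ^(k-1) then τ^(k) is the maximal valid flooding. -/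
/-! Each Berge step takes a minimum with the previous value, so the iteration decreases; and a
flooding `τ ≤ σ` stays below the update of `σ`, since `τ x ≤ max (v x y) (τ y) ≤ max (v x y) (σ y)`
for every neighbour `y`. Hence every flooding below `ω` lies below all iterates. A fixed point of
the step satisfies the flooding inequalities by construction and lies below `ω` by monotonicity,
so it is the largest flooding below `ω`. -/

open Finset

namespace Berge

variable {X : Type*} [Fintype X] (Adj : X → X → Prop) [DecidableRel Adj] (v : X → X → ℝ)

def IsFlooding (τ : X → ℝ) : Prop :=
  ∀ x y, Adj x y → τ x ≤ max (v x y) (τ y)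

def IsStep (σ σ' : X → ℝ) : Prop :=
  (∀ x, univ.filter (fun y => Adj x y) = ∅ → σ' x = σ x) ∧
  ∀ x (hne : (univ.filter (fun y => Adj x y)).Nonempty),
    σ' x = min (σ x) ((univ.filter (fun y => Adj x y)).inf' hne fun y => max (v x y) (σ y))

variable {Adj v}

namespace IsStep

variable {σ σ' : X → ℝ}

theorem le (h : IsStep Adj v σ σ') : σ' ≤ σ := by
  intro x
  rcases (univ.filter (fun y => Adj x y)).eq_empty_or_nonempty with hx | hx
  · exact (h.1 x hx).le
  · exact (h.2 x hx).trans_le (min_le_left _ _)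

theorem le_max (h : IsStep Adj v σ σ') {x y : X} (hxy : Adj x y) :
    σ' x ≤ max (v x y) (σ y) := by
  have hy : y ∈ univ.filter (fun z => Adj x z) := by simpa using hxy
  calc σ' x ≤ (univ.filter (fun z => Adj x z)).inf' ⟨y, hy⟩ (fun z => max (v x z) (σ z)) :=
        (h.2 x ⟨y, hy⟩).trans_le (min_le_right _ _)
    _ ≤ max (v x y) (σ y) := inf'_le _ hy

theorem isFlooding_of_fixed (h : IsStep Adj v σ σ) : IsFlooding Adj v σ :=
  fun _ _ hxy => h.le_max hxy

theorem le_of_isFlooding (h : IsStep Adj v σ σ') {τ : X → ℝ} (hτ : IsFlooding Adj v τ)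
    (hτσ : τ ≤ σ) : τ ≤ σ' := by
  intro x
  rcases (univ.filter (fun y => Adj x y)).eq_empty_or_nonempty with hx | hx
  · exact (h.1 x hx).symm ▸ hτσ x
  · rw [h.2 x hx]
    refine le_min (hτσ x) (le_inf' hx _ fun y hy => ?_)
    exact (hτ x y (mem_filter.1 hy).2).trans (max_le_max_left _ (hτσ y))

end IsStep

variable {τs : ℕ → X → ℝ}

theorem antitone_of_isStep (h : ∀ k, IsStep Adj v (τs k) (τs (k + 1))) : Antitone τs :=
  antitone_nat_of_succ_le fun k => (h k).le

theorem le_iterate_of_isFlooding (h : ∀ k, IsStep Adj v (τs k) (τs (k + 1))) {τ : X → ℝ}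
    (hτ : IsFlooding Adj v τ) (hτ0 : τ ≤ τs 0) (k : ℕ) : τ ≤ τs k := by
  induction k with
  | zero => exact hτ0
  | succ k ih => exact (h k).le_of_isFlooding hτ ih

end Berge

open Berge in
theorem stmt_13_general {X : Type*} [Fintype X] (Adj : X → X → Prop) [DecidableRel Adj]
    (v : X → X → ℝ) (ω : X → ℝ)
    (τs : ℕ → X → ℝ)
    (h0 : τs 0 = ω)
    (hiso : ∀ k x, (Finset.univ.filter (fun y => Adj x y)) = ∅ → τs (k + 1) x = τs k x)
    (hstep : ∀ k x (hne : (Finset.univ.filter (fun y => Adj x y)).Nonempty),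
      τs (k + 1) x = min (τs k x)
        ((Finset.univ.filter (fun y => Adj x y)).inf' hne
          (fun y => max (v x y) (τs k y)))) :
    (∀ k x, τs (k + 1) x ≤ τs k x) ∧
    (∀ τ : X → ℝ, (∀ x y, Adj x y → τ x ≤ max (v x y) (τ y)) → (∀ x, τ x ≤ ω x) →
      ∀ k x, τ x ≤ τs k x) ∧
    (∀ k, τs (k + 1) = τs k →
      ((∀ x y, Adj x y → τs (k + 1) x ≤ max (v x y) (τs (k + 1) y)) ∧
       (∀ x, τs (k + 1) x ≤ ω x) ∧
       (∀ τ : X → ℝ, (∀ x y, Adj x y → τ x ≤ max (v x y) (τ y)) → (∀ x, τ x ≤ ω x) →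
         ∀ x, τ x ≤ τs (k + 1) x))) := by
  subst h0
  have hB : ∀ k, IsStep Adj v (τs k) (τs (k + 1)) := fun k => ⟨hiso k, hstep k⟩
  have hanti := antitone_of_isStep hB
  have hlow : ∀ τ, IsFlooding Adj v τ → τ ≤ τs 0 → ∀ k, τ ≤ τs k :=
    fun τ hτ hτ0 => le_iterate_of_isFlooding hB hτ hτ0
  refine ⟨fun k => hanti k.le_succ, hlow, fun k hfix => ⟨?_, hanti (Nat.zero_le _), ?_⟩⟩
  · have hfixed : IsStep Adj v (τs (k + 1)) (τs (k + 1)) := by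
      simpa only [hfix] using hB k
    exact hfixed.isFlooding_of_fixed
  · exact fun τ hτ hτ0 => hlow τ hτ hτ0 (k + 1)

/-- Berge's iteration τ^(0) = ω,
τ^(k)_i = min(τ^(k-1)_i, min over neighbors j of max(v_{ij}, τ^(k-1)_j)) is pointwise
nonincreasing, every valid flooding is a pointwise lower bound of every τ^(k), and if
τ^(k+1) = τ^(k) then τ^(k+1) is the maximal valid flooding. -/
theorem stmt_13 {X : Type*} [Fintype X] (Adj : X → X → Prop) [DecidableRel Adj]
    (hsymm : ∀ x y, Adj x y → Adj y x) (v : X → X → ℝ) (ω : X → ℝ)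
    (τs : ℕ → X → ℝ)
    (h0 : τs 0 = ω)
    (hiso : ∀ k x, (Finset.univ.filter (fun y => Adj x y)) = ∅ → τs (k + 1) x = τs k x)
    (hstep : ∀ k x (hne : (Finset.univ.filter (fun y => Adj x y)).Nonempty),
      τs (k + 1) x = min (τs k x)
        ((Finset.univ.filter (fun y => Adj x y)).inf' hne
          (fun y => max (v x y) (τs k y)))) :
    (∀ k x, τs (k + 1) x ≤ τs k x) ∧
    (∀ τ : X → ℝ, (∀ x y, Adj x y → τ x ≤ max (v x y) (τ y)) → (∀ x, τ x ≤ ω x) →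
      ∀ k x, τ x ≤ τs k x) ∧
    (∀ k, τs (k + 1) = τs k →
      ((∀ x y, Adj x y → τs (k + 1) x ≤ max (v x y) (τs (k + 1) y)) ∧
       (∀ x, τs (k + 1) x ≤ ω x) ∧
       (∀ τ : X → ℝ, (∀ x y, Adj x y → τ x ≤ max (v x y) (τ y)) → (∀ x, τ x ≤ ω x) →
         ∀ x, τ x ≤ τs (k + 1) x))) :=
  stmt_13_general Adj v ω τs h0 hiso hstep
end

section
/- Berge's iteration terminates: on a finite graph with n vertices, the iteration τ^(k+1) = F(τ^(k)) starting from τ^(0) = ω reaches a fixed point after at most n iterations, i.e., τ^(n) = τ^(n+1). -/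
/-!
Write `walkValue v ω x l` for the bottleneck value of the walk `x, l₁, …, lₘ`: the largest of its
edge weights and of the ceiling `ω lₘ` at its end. By induction on `k`, `τ^(k)_x` is the least
value of a walk of length at most `k` starting at `x`. Cutting a closed subwalk out of a walk does
not increase its value, so the minimum is already attained by a path, which has length below `n`;
hence `τ^(n) = τ^(n+1)`.
-/

open List

namespace Berge

variable {X α : Type*} [LinearOrder α] {v : X → X → α} {ω : X → α} {Adj : X → X → Prop}

def walkValue (v : X → X → α) (ω : X → α) : X → List X → α
  | x, [] => ω x
  | x, y :: l => max (v x y) (walkValue v ω y l)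

@[simp] lemma walkValue_nil (x : X) : walkValue v ω x [] = ω x := rfl

@[simp] lemma walkValue_cons (x y : X) (l : List X) :
    walkValue v ω x (y :: l) = max (v x y) (walkValue v ω y l) := rfl

lemma walkValue_le_walkValue_append_cons (x y : X) (q r : List X) :
    walkValue v ω y r ≤ walkValue v ω x (q ++ y :: r) := by
  induction q generalizing x with
  | nil => exact le_max_right _ _
  | cons a q ih => exact (ih a).trans (le_max_right _ _)

theorem exists_nodup_sublist_walkValue_le {x : X} {l : List X} (hl : IsChain Adj (x :: l)) :
    ∃ l', l' <+ l ∧ IsChain Adj (x :: l') ∧ (x :: l').Nodup ∧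
      walkValue v ω x l' ≤ walkValue v ω x l := by
  by_cases hx : x ∈ l
  · obtain ⟨q, r, rfl⟩ := append_of_mem hx
    have hr : IsChain Adj (x :: r) := (isChain_split (l₁ := x :: q)).mp hl |>.2
    have : r.length < (q ++ x :: r).length := by simp only [length_append, length_cons]; omega
    obtain ⟨l', hsub, hc, hnd, hle⟩ := exists_nodup_sublist_walkValue_le hr
    exact ⟨l', (hsub.trans (sublist_cons_self x r)).trans (sublist_append_right q _), hc, hnd,
      hle.trans (walkValue_le_walkValue_append_cons x x q r)⟩
  · match l, hl with
    | [], _ => exact ⟨[], Sublist.refl _, isChain_singleton x, nodup_singleton x, le_rfl⟩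
    | y :: t, hl =>
      obtain ⟨hxy, ht⟩ := isChain_cons_cons.mp hl
      obtain ⟨t', hsub, hc, hnd, hle⟩ := exists_nodup_sublist_walkValue_le ht
      exact ⟨y :: t', hsub.cons_cons y, hc.cons_cons hxy,
        nodup_cons.mpr ⟨fun hmem => hx ((hsub.cons_cons y).subset hmem), hnd⟩,
        max_le_max le_rfl hle⟩
termination_by l.length

variable (v ω Adj) in
def walkValues (x : X) (k : ℕ) : Set α :=
  walkValue v ω x '' {l | IsChain Adj (x :: l) ∧ l.length ≤ k}

lemma walkValues_mono {x : X} {j k : ℕ} (hjk : j ≤ k) :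
    walkValues v ω Adj x j ⊆ walkValues v ω Adj x k :=
  Set.image_mono fun _ ⟨hc, hl⟩ => ⟨hc, hl.trans hjk⟩

lemma lowerBounds_walkValues_card_subset [Fintype X] (x : X) (k : ℕ) :
    lowerBounds (walkValues v ω Adj x (Fintype.card X)) ⊆
      lowerBounds (walkValues v ω Adj x k) := by
  rintro b hb _ ⟨l, ⟨hc, -⟩, rfl⟩
  obtain ⟨l', -, hc', hnd, hle⟩ := exists_nodup_sublist_walkValue_le (v := v) (ω := ω) hc
  have hlen : l'.length ≤ Fintype.card X := by
    have := hnd.length_le_card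
    simp only [length_cons] at this
    omega
  exact (hb ⟨l', ⟨hc', hlen⟩, rfl⟩).trans hle

variable (v Adj) in
def bergeCandidates (σ : X → α) (x : X) : Set α :=
  insert (σ x) ((fun y => max (v x y) (σ y)) '' {y | Adj x y})

lemma isLeast_bergeCandidates [Fintype X] [DecidableRel Adj] {σ τ : X → α} {x : X}
    (hiso : Finset.univ.filter (fun y => Adj x y) = ∅ → τ x = σ x)
    (hstep : ∀ hne : (Finset.univ.filter (fun y => Adj x y)).Nonempty,
      τ x = min (σ x) ((Finset.univ.filter (fun y => Adj x y)).inf' hne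
        (fun y => max (v x y) (σ y)))) :
    IsLeast (bergeCandidates v Adj σ x) (τ x) := by
  rcases (Finset.univ.filter (fun y => Adj x y)).eq_empty_or_nonempty with hempty | hne
  · have hτ := hiso hempty
    refine ⟨hτ ▸ Set.mem_insert _ _, ?_⟩
    rintro _ (rfl | ⟨y, hxy, rfl⟩)
    · exact hτ.le
    · exact absurd (Finset.mem_filter.mpr ⟨Finset.mem_univ y, hxy⟩)
        (hempty ▸ Finset.notMem_empty y)
  · rw [hstep hne]
    constructor
    · rcases min_choice (σ x) ((Finset.univ.filter (fun y => Adj x y)).inf' hne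
        (fun y => max (v x y) (σ y))) with h | h <;> rw [h]
      · exact Set.mem_insert _ _
      · obtain ⟨y, hy, hmin⟩ := Finset.exists_mem_eq_inf' hne (fun y => max (v x y) (σ y))
        exact Set.mem_insert_of_mem _ ⟨y, (Finset.mem_filter.mp hy).2, hmin.symm⟩
    · rintro _ (rfl | ⟨y, hxy, rfl⟩)
      · exact min_le_left _ _
      · exact (min_le_right _ _).trans
          (Finset.inf'_le _ (Finset.mem_filter.mpr ⟨Finset.mem_univ y, hxy⟩))

lemma isLeast_walkValues {τs : ℕ → X → α} (h0 : τs 0 = ω)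
    (hstep : ∀ k x, IsLeast (bergeCandidates v Adj (τs k) x) (τs (k + 1) x)) (k : ℕ) (x : X) :
    IsLeast (walkValues v ω Adj x k) (τs k x) := by
  induction k generalizing x with
  | zero =>
    refine ⟨⟨[], ⟨isChain_singleton x, le_rfl⟩, by simp [h0]⟩, ?_⟩
    rintro _ ⟨l, ⟨-, hl⟩, rfl⟩
    rw [length_eq_zero_iff.mp (Nat.le_zero.mp hl), h0, walkValue_nil]
  | succ k ih =>
    constructor
    · rcases (hstep k x).1 with heq | ⟨y, hxy, heq⟩
      · obtain ⟨l, ⟨hc, hl⟩, hval⟩ := (ih x).1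
        exact ⟨l, ⟨hc, hl.trans k.le_succ⟩, hval.trans heq.symm⟩
      · obtain ⟨l, ⟨hc, hl⟩, hval⟩ := (ih y).1
        exact ⟨y :: l, ⟨hc.cons_cons hxy, Nat.succ_le_succ hl⟩,
          by rw [walkValue_cons, hval]; exact heq⟩
    · rintro _ ⟨l, ⟨hc, hl⟩, rfl⟩
      match l, hc, hl with
      | [], hc, _ =>
        exact ((hstep k x).2 (Set.mem_insert _ _)).trans ((ih x).2 ⟨[], ⟨hc, k.zero_le⟩, rfl⟩)
      | y :: t, hc, hl =>
        obtain ⟨hxy, ht⟩ := isChain_cons_cons.mp hc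
        have hτy : τs k y ≤ walkValue v ω y t := (ih y).2 ⟨t, ⟨ht, by simpa using hl⟩, rfl⟩
        exact ((hstep k x).2 (Set.mem_insert_of_mem _ ⟨y, hxy, rfl⟩)).trans
          (max_le_max le_rfl hτy)

end Berge

open Berge in
theorem stmt_14_general {X : Type*} [Fintype X] (Adj : X → X → Prop) [DecidableRel Adj]
    (v : X → X → ℝ) (ω : X → ℝ)
    (τs : ℕ → X → ℝ)
    (h0 : τs 0 = ω)
    (hiso : ∀ k x, (Finset.univ.filter (fun y => Adj x y)) = ∅ → τs (k + 1) x = τs k x)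
    (hstep : ∀ k x (hne : (Finset.univ.filter (fun y => Adj x y)).Nonempty),
      τs (k + 1) x = min (τs k x)
        ((Finset.univ.filter (fun y => Adj x y)).inf' hne
          (fun y => max (v x y) (τs k y)))) :
    τs (Fintype.card X + 1) = τs (Fintype.card X) := by
  have hτ := isLeast_walkValues h0 fun k x => isLeast_bergeCandidates (hiso k x) (hstep k x)
  funext x
  exact le_antisymm
    ((hτ _ x).2 (walkValues_mono (Nat.le_succ _) (hτ _ x).1))
    (lowerBounds_walkValues_card_subset x _ (hτ _ x).2 (hτ _ x).1)

/-- Berge's iteration terminates: on a finite graph with n vertices, the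
iteration τ^(k+1) = F(τ^(k)) starting from τ^(0) = ω reaches a fixed point after at most
n iterations, i.e. τ^(n) = τ^(n+1). -/
theorem stmt_14 {X : Type*} [Fintype X] (Adj : X → X → Prop) [DecidableRel Adj]
    (hsymm : ∀ x y, Adj x y → Adj y x) (v : X → X → ℝ) (ω : X → ℝ)
    (τs : ℕ → X → ℝ)
    (h0 : τs 0 = ω)
    (hiso : ∀ k x, (Finset.univ.filter (fun y => Adj x y)) = ∅ → τs (k + 1) x = τs k x)
    (hstep : ∀ k x (hne : (Finset.univ.filter (fun y => Adj x y)).Nonempty),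
      τs (k + 1) x = min (τs k x)
        ((Finset.univ.filter (fun y => Adj x y)).inf' hne
          (fun y => max (v x y) (τs k y)))) :
    τs (Fintype.card X + 1) = τs (Fintype.card X) :=
  stmt_14_general Adj v ω τs h0 hiso hstep
end

section
/- Dijkstra's invariant for the greedy selection: in a graph with nonnegative edge weights, if S is a set of vertices containing the source s such that for each u in S the tentative distance d(u) equals the true shortest-path distance from s, and for each v not in S, d(v) is the minimum over u ∈ S of d(u) + w(u,v) (∞ if no edge), then the vertex v* ∉ S minimizing d(v*) satisfies d(v*) = true shortest-path distance from s to v*. -/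
open scoped ENNReal

/-- Cost of a walk given as a list of vertices, with nonnegative (possibly infinite)
edge weights; absent edges have weight ∞. -/
noncomputable def walkCost {V : Type*} (w : V → V → ℝ≥0∞) : List V → ℝ≥0∞
  | [] => 0
  | [_] => 0
  | x :: y :: rest => w x y + walkCost w (y :: rest)

/-- Shortest-path distance from s to t. -/
noncomputable def gdist {V : Type*} (w : V → V → ℝ≥0∞) (s t : V) : ℝ≥0∞ :=
  sInf {c | ∃ l : List V, l.head? = some s ∧ l.getLast? = some t ∧ walkCost w l = c}

/-! Any walk from `s` to `v* ∉ S` leaves `S` along some edge `(a, y)` with `a ∈ S`, `y ∉ S`.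
Its part up to `a` costs at least `dist(s, a)`, so the walk costs at least
`dist(s, a) + w a y ≥ d y ≥ d v*`. Conversely, `dist(s, v*) ≤ dist(s, u) + w u v*` for every
`u ∈ S` by the triangle inequality. -/

section

variable {V : Type*} (w : V → V → ℝ≥0∞)

theorem walkCost_cons_cons (x y : V) (rest : List V) :
    walkCost w (x :: y :: rest) = w x y + walkCost w (y :: rest) := rfl

theorem walkCost_append_singleton :
    ∀ {l : List V} {u : V} (v : V), l.getLast? = some u →
      walkCost w (l ++ [v]) = walkCost w l + w u v
  | [], _, _, h => by simp at h
  | [x], u, v, h => by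
      obtain rfl : x = u := by simpa using h
      simp [walkCost]
  | x :: y :: rest, u, v, h => by
      rw [List.getLast?_cons_cons] at h
      rw [List.cons_append, List.cons_append, walkCost_cons_cons, ← List.cons_append,
        walkCost_append_singleton v h, walkCost_cons_cons, add_assoc]

theorem gdist_self (s : V) : gdist w s s = 0 :=
  nonpos_iff_eq_zero.mp <| sInf_le ⟨[s], rfl, rfl, rfl⟩

theorem gdist_le_gdist_add (s u v : V) : gdist w s v ≤ gdist w s u + w u v := by
  rw [gdist, gdist, ENNReal.sInf_add]
  refine le_iInf₂ fun c ⟨l, hhead, hlast, hcost⟩ => sInf_le ⟨l ++ [v], ?_, by simp, ?_⟩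
  · rwa [List.head?_append_of_ne_nil _ (by rintro rfl; simp at hhead)]
  · rw [walkCost_append_singleton w v hlast, hcost]

variable {w} {s : V} {S : Set V} {c : ℝ≥0∞}

theorem le_gdist_add_walkCost_of_le_crossing
    (hc : ∀ a ∈ S, ∀ y ∉ S, c ≤ gdist w s a + w a y) :
    ∀ {l : List V} {x t : V}, l.head? = some x → l.getLast? = some t → x ∈ S → t ∉ S →
      c ≤ gdist w s x + walkCost w l
  | [], _, _, hhead, _, _, _ => by simp at hhead
  | [a], x, t, hhead, hlast, hx, ht => by
      obtain rfl : a = x := by simpa using hhead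
      obtain rfl : a = t := by simpa using hlast
      exact absurd hx ht
  | a :: y :: rest, x, t, hhead, hlast, hx, ht => by
      obtain rfl : a = x := by simpa using hhead
      rw [List.getLast?_cons_cons] at hlast
      rw [walkCost_cons_cons, ← add_assoc]
      by_cases hy : y ∈ S
      · calc c ≤ gdist w s y + walkCost w (y :: rest) :=
              le_gdist_add_walkCost_of_le_crossing hc rfl hlast hy ht
          _ ≤ gdist w s a + w a y + walkCost w (y :: rest) := by
              gcongr; exact gdist_le_gdist_add w s a y
      · exact (hc a hx y hy).trans le_self_add

theorem le_gdist_of_le_crossing (hc : ∀ a ∈ S, ∀ y ∉ S, c ≤ gdist w s a + w a y)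
    (hs : s ∈ S) {t : V} (ht : t ∉ S) : c ≤ gdist w s t := by
  refine le_sInf fun _ ⟨l, hhead, hlast, hcost⟩ => ?_
  simpa [gdist_self, hcost] using le_gdist_add_walkCost_of_le_crossing hc hhead hlast hs ht

end

theorem stmt_17_general {V : Type*} (w : V → V → ℝ≥0∞) (s : V)
    (S : Finset V) (hs : s ∈ S) (d : V → ℝ≥0∞)
    (hdout : ∀ v ∉ S, d v = S.inf (fun u => gdist w s u + w u v))
    (vstar : V) (hv : vstar ∉ S) (hmin : ∀ v ∉ S, d vstar ≤ d v) :
    d vstar = gdist w s vstar := by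
  have hcrossing : ∀ a ∈ (S : Set V), ∀ y ∉ (S : Set V), d vstar ≤ gdist w s a + w a y :=
    fun a ha y hy => (hmin y hy).trans <| (hdout y hy).trans_le <| Finset.inf_le ha
  refine le_antisymm (le_gdist_of_le_crossing hcrossing hs hv) ?_
  rw [hdout vstar hv]
  exact Finset.le_inf fun u _ => gdist_le_gdist_add w s u vstar

/-- Dijkstra's greedy selection is correct: with nonnegative weights, if
d(u) = dist(s,u) for u ∈ S (s ∈ S) and d(v) = min over u ∈ S of dist(s,u) + w(u,v) for
v ∉ S, then a vertex v* ∉ S minimizing d satisfies d(v*) = dist(s, v*). -/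
theorem stmt_17 {V : Type*} [Fintype V] (w : V → V → ℝ≥0∞) (s : V)
    (S : Finset V) (hs : s ∈ S) (d : V → ℝ≥0∞)
    (hdS : ∀ u ∈ S, d u = gdist w s u)
    (hdout : ∀ v ∉ S, d v = S.inf (fun u => gdist w s u + w u v))
    (vstar : V) (hv : vstar ∉ S) (hmin : ∀ v ∉ S, d vstar ≤ d v) :
    d vstar = gdist w s vstar :=
  stmt_17_general w s S hs d hdout vstar hv hmin
end

section
/- The Dijkstra distance update preserves the invariant: with nonnegative weights, if before selecting v* the tentative distances satisfy d(v) = min_{u ∈ S} (dist(s,u) + w(u,v)) for v ∉ S, then after adding v* to S and performing d(i) := min(d(i), d(v*) + w(v*, i)) for each neighbor i of v*, the tentative distances satisfy the same invariant with respect to S ∪ {v*}. -/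
open scoped ENNReal

/-! The new vertex `v*` gets the right label because every walk from `s ∈ S` to `v*` leaves `S`
along some edge `x → y`, and the tentative label of `y` already bounds the cost of the walk up to
that edge; minimality of `d v*` finishes. The labels outside `S ∪ {v*}` then only need the one
new candidate `dist(s, v*) + w(v*, v)`, which is exactly what the update adds. -/

namespace Dijkstra

variable {V : Type*} (w : V → V → ℝ≥0∞)

lemma walkCost_cons_cons (x y : V) (l : List V) :
    walkCost w (x :: y :: l) = w x y + walkCost w (y :: l) := rfl

lemma walkCost_append_singleton {a : V} (t : V) :
    ∀ {l : List V}, l.getLast? = some a → walkCost w (l ++ [t]) = walkCost w l + w a t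
  | [], h => by simp at h
  | [x], h => by
    obtain rfl : x = a := by simpa using h
    simp [walkCost]
  | x :: y :: l, h => by
    rw [List.getLast?_cons_cons] at h
    rw [List.cons_append, List.cons_append, walkCost_cons_cons, ← List.cons_append,
      walkCost_append_singleton t h, walkCost_cons_cons, add_assoc]

lemma gdist_le_walkCost {s t : V} {l : List V} (hs : l.head? = some s)
    (ht : l.getLast? = some t) : gdist w s t ≤ walkCost w l :=
  sInf_le ⟨l, hs, ht, rfl⟩

lemma gdist_self (s : V) : gdist w s s = 0 :=
  nonpos_iff_eq_zero.mp (gdist_le_walkCost w (l := [s]) rfl rfl)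

lemma gdist_le_gdist_add (s u t : V) : gdist w s t ≤ gdist w s u + w u t := by
  conv_rhs => rw [gdist]
  rw [ENNReal.sInf_add]
  refine le_iInf₂ fun c ⟨l, hs, hu, hc⟩ => hc ▸ ?_
  have hl : l ≠ [] := by rintro rfl; simp at hs
  calc gdist w s t ≤ walkCost w (l ++ [t]) :=
        gdist_le_walkCost w (by rwa [List.head?_append_of_ne_nil _ hl]) (by simp)
    _ = walkCost w l + w u t := walkCost_append_singleton w t hu

lemma exists_edge_out_le {s t : V} (S : Set V) (ht : t ∉ S) :
    ∀ {a : V} (l : List V), a ∈ S → (a :: l).getLast? = some t →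
      ∃ x ∈ S, ∃ y ∉ S, gdist w s x + w x y ≤ gdist w s a + walkCost w (a :: l)
  | a, [], ha, h => by
    obtain rfl : a = t := by simpa using h
    exact absurd ha ht
  | a, y :: l, ha, h => by
    rw [List.getLast?_cons_cons] at h
    rw [walkCost_cons_cons, ← add_assoc]
    by_cases hy : y ∈ S
    · obtain ⟨x', hx', y', hy', hle⟩ := exists_edge_out_le S ht l hy h
      exact ⟨x', hx', y', hy', hle.trans (by gcongr; exact gdist_le_gdist_add w s a y)⟩
    · exact ⟨a, ha, y, hy, le_self_add⟩

/-- The selection lemma. -/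
lemma gdist_eq_of_forall_le [DecidableEq V] {s : V} {S : Finset V} (hs : s ∈ S)
    {d : V → ℝ≥0∞} (hdout : ∀ v ∉ S, d v = S.inf (fun u => gdist w s u + w u v))
    {vstar : V} (hv : vstar ∉ S) (hmin : ∀ v ∉ S, d vstar ≤ d v) :
    d vstar = gdist w s vstar := by
  refine le_antisymm (le_sInf ?_) ?_
  · rintro c ⟨_ | ⟨a, l⟩, hhead, hlast, rfl⟩
    · simp at hhead
    obtain rfl : a = s := by simpa using hhead
    obtain ⟨x, hx, y, hy, hle⟩ := exists_edge_out_le w (S : Set V) hv l hs hlast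
    calc d vstar ≤ d y := hmin y hy
      _ = S.inf (fun u => gdist w a u + w u y) := hdout y hy
      _ ≤ gdist w a x + w x y := Finset.inf_le hx
      _ ≤ walkCost w (a :: l) := by rwa [gdist_self, zero_add] at hle
  · rw [hdout vstar hv]
    exact Finset.le_inf fun u _ => gdist_le_gdist_add w s u vstar

end Dijkstra

open Dijkstra in
theorem stmt_19_general {V : Type*} [DecidableEq V] (w : V → V → ℝ≥0∞) (s : V)
    (S : Finset V) (hs : s ∈ S) (d d' : V → ℝ≥0∞)
    (hdS : ∀ u ∈ S, d u = gdist w s u)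
    (hdout : ∀ v ∉ S, d v = S.inf (fun u => gdist w s u + w u v))
    (vstar : V) (hv : vstar ∉ S) (hmin : ∀ v ∉ S, d vstar ≤ d v)
    (hd'in : ∀ u ∈ insert vstar S, d' u = d u)
    (hd'out : ∀ v ∉ insert vstar S, d' v = min (d v) (d vstar + w vstar v)) :
    (∀ u ∈ insert vstar S, d' u = gdist w s u) ∧
    (∀ v ∉ insert vstar S,
      d' v = (insert vstar S).inf (fun u => gdist w s u + w u v)) := by
  have hvstar := gdist_eq_of_forall_le w hs hdout hv hmin
  refine ⟨fun u hu => ?_, fun v hvI => ?_⟩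
  · rw [hd'in u hu]
    rcases Finset.mem_insert.mp hu with rfl | huS
    · exact hvstar
    · exact hdS u huS
  · have hvS : v ∉ S := fun h => hvI (Finset.mem_insert_of_mem h)
    rw [hd'out v hvI, Finset.inf_insert, hdout v hvS, hvstar, min_comm]

/-- The Dijkstra distance update preserves the invariant: after selecting
the argmin v* ∉ S and updating d(i) := min(d(i), d(v*) + w(v*, i)), the tentative
distances satisfy the invariant with respect to S ∪ {v*}. -/
theorem stmt_19 {V : Type*} [Fintype V] [DecidableEq V] (w : V → V → ℝ≥0∞) (s : V)
    (S : Finset V) (hs : s ∈ S) (d d' : V → ℝ≥0∞)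
    (hdS : ∀ u ∈ S, d u = gdist w s u)
    (hdout : ∀ v ∉ S, d v = S.inf (fun u => gdist w s u + w u v))
    (vstar : V) (hv : vstar ∉ S) (hmin : ∀ v ∉ S, d vstar ≤ d v)
    (hd'in : ∀ u ∈ insert vstar S, d' u = d u)
    (hd'out : ∀ v ∉ insert vstar S, d' v = min (d v) (d vstar + w vstar v)) :
    (∀ u ∈ insert vstar S, d' u = gdist w s u) ∧
    (∀ v ∉ insert vstar S,
      d' v = (insert vstar S).inf (fun u => gdist w s u + w u v)) :=
  stmt_19_general w s S hs d d' hdS hdout vstar hv hmin hd'in hd'out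
end
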